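/- Given bipartite Euler system data over R satisfying hypotheses (DU), (LI), (RHO) and (LS), let (κ_n)_{n ∈ N^odd}, (λ_n)_{n ∈ N^even} be a free bipartite Euler system of odd type. Then λ_n ∈ Stub_n for every n ∈ N^even and κ_n ∈ Stub_n for every n ∈ N^odd; equivalently, m_n ≤ ind(λ_n, R) for every n ∈ N^even and m_n ≤ ind(κ_n, Sel(n)) for every n ∈ N^odd. -/

import Mathlib

/-- The length of a module: the Krull dimension of its lattice of submodules. -/
noncomputable def moduleLength (R M : Type*) [Ring R] [AddCommGroup M] [Module R M] : ℕ∞ :=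
  WithBot.unbotD 0 (Order.krullDim (Submodule R M))

/-- The `𝔪`-torsion submodule `S[𝔪]` of a module over a local ring. -/
noncomputable def mTorsion (R : Type*) [CommRing R] [IsLocalRing R]
    (S : Type*) [AddCommGroup S] [Module R S] : Submodule R S :=
  Submodule.torsionBySet R S ((IsLocalRing.maximalIdeal R : Ideal R) : Set R)

/-- The dimension of `S[𝔪]` as a vector space over the residue field `R/𝔪`. -/
noncomputable def mdim (R : Type*) [CommRing R] [IsLocalRing R]
    (S : Type*) [AddCommGroup S] [Module R S] : ℕ :=
  Module.finrank (R ⧸ IsLocalRing.maximalIdeal R)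
    (Submodule.torsionBySet R S ((IsLocalRing.maximalIdeal R : Ideal R) : Set R))

/-!
Induction on `m n`. For `n` even with `m n > 0`, (LS) gives `ℓ` with `a(n,ℓ) > 0`, so by (LI)
the odd set `n ∪ {ℓ}` has smaller `m`. By (DU) the image of `loc^ord_ℓ` has length `k - a(n,ℓ)`
inside `H_ord(ℓ) ≅ R`; as the ideals of `R` are the powers `𝔪 ^ j` with `length (𝔪 ^ j) = k - j`,
it lies in `𝔪 ^ a(n,ℓ) H_ord(ℓ)`, so `loc^ord_ℓ(κ_{n∪{ℓ}}) ∈ 𝔪 ^ m n H_ord(ℓ)`, and the first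
reciprocity law gives `λ_n ∈ 𝔪 ^ m n`. For `n` odd, (LS) applied to the free line through `κ_n`
gives `ℓ` such that `loc^unr_ℓ` maps that line isomorphically onto `H_unr(ℓ)` (an injective
endomorphism of the Artinian ring `R` is bijective); then `b(n,ℓ) = 0`, `m (n ∪ {ℓ}) = m n`, and
the second reciprocity law pulls `λ_{n∪{ℓ}} ∈ 𝔪 ^ m n` back to `κ_n`. Both reciprocity laws enter
through annihilators: an isomorphism `R ⧸ (μ) ≃ R ⧸ (c)` forces `(μ) = (c)`.
-/

open IsLocalRing

theorem moduleLength_eq_length (R M : Type*) [Ring R] [AddCommGroup M] [Module R M] :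
    moduleLength R M = Module.length R M := by
  rw [moduleLength, ← Module.coe_length, WithBot.unbotD_coe]

theorem LinearMap.length_range_pos {R M N : Type*} [Ring R] [AddCommGroup M] [Module R M]
    [AddCommGroup N] [Module R N] {f : M →ₗ[R] N} {x : M} (hx : f x ≠ 0) :
    0 < Module.length R (LinearMap.range f) :=
  Module.length_pos_iff.2 <| Submodule.nontrivial_iff_ne_bot.2 fun h =>
    hx (LinearMap.range_eq_bot.1 h ▸ rfl)

section UniformizerPowers

variable {R : Type*} [CommRing R] [IsLocalRing R] {π : R} {k : ℕ}

theorem exists_eq_unit_mul_pow (hπ : maximalIdeal R = Ideal.span {π}) {N : ℕ} (hN : π ^ N = 0)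
    {x : R} (hx : x ≠ 0) : ∃ (u : Rˣ) (j : ℕ), x = u * π ^ j := by
  suffices ∀ t j (y : R), π ^ (j + t) = 0 → π ^ j * y ≠ 0 →
      ∃ (u : Rˣ) (i : ℕ), π ^ j * y = u * π ^ i by
    simpa using this N 0 x (by simpa) (by simpa)
  intro t
  induction t with
  | zero => intro j y h hy; rw [add_zero] at h; simp [h] at hy
  | succ t ih =>
    intro j y h hy
    by_cases hu : IsUnit y
    · exact ⟨hu.unit, j, mul_comm _ _⟩
    obtain ⟨z, rfl⟩ := Ideal.mem_span_singleton.1 (hπ ▸ (mem_maximalIdeal y).2 hu)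
    rw [← mul_assoc, ← pow_succ] at hy ⊢
    exact ih (j + 1) z (by rwa [add_right_comm, add_assoc]) hy

theorem span_pow_succ_lt_span_pow (hπ : maximalIdeal R = Ideal.span {π}) {j : ℕ}
    (hj : π ^ j ≠ 0) : Ideal.span {π ^ (j + 1)} < Ideal.span {π ^ j} := by
  refine (Ideal.span_singleton_le_span_singleton.2
    (pow_dvd_pow π (j.le_add_right 1))).lt_of_not_ge fun h => hj ?_
  obtain ⟨y, hy⟩ := Ideal.span_singleton_le_span_singleton.1 h
  -- `π ^ j = π ^ (j + 1) * y` forces `π ^ j * (1 - π * y) = 0`, and `1 - π * y` is a unit.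
  have hunit : IsUnit (1 - π * y) := isUnit_one_sub_self_of_mem_nonunits _
    ((mem_maximalIdeal _).1 (hπ ▸ Ideal.mul_mem_right y _ (Ideal.mem_span_singleton_self π)))
  exact hunit.mul_left_eq_zero.1 (by linear_combination hy)

theorem le_height_span_pow (hπ : maximalIdeal R = Ideal.span {π}) (t j : ℕ)
    (h : π ^ (j + t) ≠ 0) : (t + 1 : ℕ∞) ≤ Order.height (Ideal.span {π ^ j}) := by
  induction t generalizing j with
  | zero =>
    refine Order.one_le_iff_pos.2 (Order.height_pos_of_bot_lt (bot_lt_iff_ne_bot.2 ?_))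
    simpa using h
  | succ t ih =>
    have hj : π ^ j ≠ 0 := fun h' => h (pow_eq_zero_of_le (by omega) h')
    calc ((t + 1 : ℕ) + 1 : ℕ∞) = (t + 1 : ℕ∞) + 1 := by push_cast; ring
      _ ≤ Order.height (Ideal.span {π ^ (j + 1)}) + 1 := by
        gcongr; exact ih (j + 1) (by rwa [add_right_comm, add_assoc])
      _ ≤ Order.height (Ideal.span {π ^ j}) :=
        Order.height_add_one_le (span_pow_succ_lt_span_pow hπ hj)

-- An ideal is determined by which of `π ^ 0, …, π ^ (i - 1)` it contains.
theorem length_le_of_pow_eq_zero (hπ : maximalIdeal R = Ideal.span {π}) {i : ℕ}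
    (hi : π ^ i = 0) : Module.length R R ≤ i := by
  classical
  let φ : Ideal R → ℕ := fun I => ((Finset.range i).filter (π ^ · ∈ I)).card
  have hφ : StrictMono φ := by
    intro I J hIJ
    obtain ⟨x, hxJ, hxI⟩ := SetLike.exists_of_lt hIJ
    obtain ⟨u, j, rfl⟩ := exists_eq_unit_mul_pow hπ hi (x := x) fun h => hxI (h ▸ I.zero_mem)
    have hjI : π ^ j ∉ I := fun h => hxI (I.mul_mem_left _ h)
    have hjJ : π ^ j ∈ J := by simpa using J.mul_mem_left (↑u⁻¹ : R) hxJ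
    have hj : j < i := lt_of_not_ge fun h => hjI (by simp [pow_eq_zero_of_le h hi])
    refine Finset.card_lt_card ((Finset.ssubset_iff_of_subset
      (Finset.monotone_filter_right _ fun _ _ hl => hIJ.le hl)).2 ⟨j, ?_, ?_⟩) <;> simp [*]
  calc Module.length R R = Order.height (⊤ : Ideal R) := Module.length_eq_height R R
    _ ≤ Order.height (φ ⊤) := Order.height_le_height_apply_of_strictMono φ hφ ⊤
    _ = φ ⊤ := Order.height_nat _
    _ ≤ i := by exact_mod_cast (Finset.card_filter_le _ _).trans (Finset.card_range i).le

theorem pow_eq_zero_iff_length_le (hπ : maximalIdeal R = Ideal.span {π})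
    (hk : Module.length R R = k) {i : ℕ} : π ^ i = 0 ↔ k ≤ i := by
  refine ⟨fun hi => by exact_mod_cast hk ▸ length_le_of_pow_eq_zero hπ hi, fun hi => ?_⟩
  refine pow_eq_zero_of_le hi (by_contra fun h => ?_)
  have := le_height_span_pow hπ k 0 (by simpa)
  rw [pow_zero, Ideal.span_singleton_one, ← Module.length_eq_height, hk] at this
  exact absurd this (by norm_cast; omega)

theorem le_maximalIdeal_pow_of_length_add_le (hπ : maximalIdeal R = Ideal.span {π})
    (hk : Module.length R R = k) {I : Ideal R} {a : ℕ} (h : Module.length R I + a ≤ k) :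
    I ≤ maximalIdeal R ^ a := by
  intro x hx
  by_cases hx0 : x = 0
  · simp [hx0]
  have hzero (i : ℕ) : π ^ i = 0 ↔ k ≤ i := pow_eq_zero_iff_length_le hπ hk
  obtain ⟨u, j, rfl⟩ := exists_eq_unit_mul_pow hπ ((hzero k).2 le_rfl) hx0
  have hj : j < k := not_le.1 fun hkj => hx0 (by simp [(hzero j).2 hkj])
  have hjI : π ^ j ∈ I := by simpa using I.mul_mem_left (↑u⁻¹ : R) hx
  have hlen : ((k - 1 - j + 1 : ℕ) : ℕ∞) ≤ Module.length R I :=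
    calc ((k - 1 - j + 1 : ℕ) : ℕ∞) ≤ Order.height (Ideal.span {π ^ j}) := by
          push_cast
          refine le_height_span_pow hπ _ j ((hzero _).not.2 ?_)
          omega
      _ ≤ Order.height I := Order.height_mono ((Ideal.span_singleton_le_iff_mem _).2 hjI)
      _ = Module.length R I := Module.length_submodule.symm
  have hja : a ≤ j := by
    have : ((k - 1 - j + 1 + a : ℕ) : ℕ∞) ≤ k := by
      push_cast
      exact (add_le_add_left hlen a).trans h
    norm_cast at this
    omega
  rw [hπ, Ideal.span_singleton_pow]
  exact Ideal.mul_mem_left _ _ (Ideal.mem_span_singleton.2 (pow_dvd_pow π hja))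

end UniformizerPowers

section FreeOfRankOne

variable {R : Type*} [CommRing R] {M N H : Type*} [AddCommGroup M] [Module R M]
  [AddCommGroup N] [Module R N] [AddCommGroup H] [Module R H]

theorem LinearEquiv.apply_mem_smul_top_iff (e : M ≃ₗ[R] N) (I : Ideal R) (x : M) :
    e x ∈ I • (⊤ : Submodule R N) ↔ x ∈ I • (⊤ : Submodule R M) := by
  have : (I • ⊤ : Submodule R N) = (I • ⊤ : Submodule R M).map (e : M →ₗ[R] N) := by
    rw [Submodule.map_smul'', Submodule.map_top, LinearEquiv.range]
  rw [this, Submodule.mem_map_equiv, LinearEquiv.symm_apply_apply]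

theorem mem_iff_mem_smul_top_of_quotient_equiv (b : Module.Basis (Fin 1) R H) {μ : R} {y : H}
    (I : Ideal R) (e : (R ⧸ Ideal.span {μ}) ≃ₗ[R] (H ⧸ Submodule.span R {y})) :
    μ ∈ I ↔ y ∈ I • (⊤ : Submodule R H) := by
  let φ : H ≃ₗ[R] R := b.equiv (.singleton (Fin 1) R) (.refl _)
  -- Both ideals are the annihilator of the same cyclic module.
  have hspan : Ideal.span {μ} = Ideal.span {φ y} := by
    have e' := e.trans (Submodule.Quotient.equiv _ (Ideal.span {φ y}) φ
      (by rw [Submodule.map_span, Set.image_singleton]; rfl))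
    rw [← Ideal.annihilator_quotient (I := Ideal.span {μ}), e'.annihilator_eq,
      Ideal.annihilator_quotient]
  rw [← φ.apply_mem_smul_top_iff, Ideal.smul_eq_mul, Ideal.mul_top,
    ← Ideal.span_singleton_le_iff_mem, hspan, Ideal.span_singleton_le_iff_mem]

theorem bijective_of_injective_of_basis [IsArtinianRing R] {ι : Type*} [Finite ι]
    (bM : Module.Basis ι R M) (bN : Module.Basis ι R N) {f : M →ₗ[R] N}
    (hf : Function.Injective f) : Function.Bijective f := by
  have := Module.Finite.of_basis bM
  let e := bN.equiv bM (.refl ι)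
  have := IsArtinian.bijective_of_injective_endomorphism (e.toLinearMap ∘ₗ f) (e.injective.comp hf)
  simpa using e.symm.bijective.comp this

theorem Submodule.eq_span_singleton_of_basis {C : Submodule R M} (b : Module.Basis (Fin 1) R C) :
    C = Submodule.span R {(b 0 : M)} := by
  have := congrArg (Submodule.map C.subtype) b.span_eq
  rwa [Submodule.map_span, Submodule.map_top, Submodule.range_subtype, Set.range_unique,
    Set.image_singleton, eq_comm] at this

end FreeOfRankOne

section ReciprocitySteps

variable {R : Type*} [CommRing R] {S H : Type*} [AddCommGroup S] [Module R S]
  [AddCommGroup H] [Module R H]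

theorem le_maximalIdeal_pow_smul_top_of_length_add_le [IsLocalRing R] {π : R} {k : ℕ}
    (hπ : maximalIdeal R = Ideal.span {π}) (hk : Module.length R R = k)
    (b : Module.Basis (Fin 1) R H) {N : Submodule R H} {a : ℕ}
    (h : Module.length R N + a ≤ k) : N ≤ maximalIdeal R ^ a • (⊤ : Submodule R H) := by
  let φ : H ≃ₗ[R] R := b.equiv (.singleton (Fin 1) R) (.refl _)
  intro y hy
  rw [← φ.apply_mem_smul_top_iff, Ideal.smul_eq_mul, Ideal.mul_top]
  refine le_maximalIdeal_pow_of_length_add_le hπ hk ?_ (Submodule.mem_map_of_mem hy)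
  rwa [← (φ.submoduleMap N).length_eq]

theorem mem_maximalIdeal_pow_of_quotient_equiv [IsLocalRing R] {π : R} {k : ℕ}
    (hπ : maximalIdeal R = Ideal.span {π}) (hk : Module.length R R = k)
    (b : Module.Basis (Fin 1) R H) (f : S →ₗ[R] H) {κ : S} {μ : R} {m m' : ℕ} {a : ℕ∞}
    (hκ : κ ∈ maximalIdeal R ^ m' • (⊤ : Submodule R S))
    (hlen : a + Module.length R (LinearMap.range f) = k) (hm : (m : ℕ∞) = m' + a)
    (e : (R ⧸ Ideal.span {μ}) ≃ₗ[R] (H ⧸ Submodule.span R {f κ})) :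
    μ ∈ maximalIdeal R ^ m := by
  lift a to ℕ using fun ha => by simp [ha] at hm
  have hrange : LinearMap.range f ≤ maximalIdeal R ^ a • ⊤ :=
    le_maximalIdeal_pow_smul_top_of_length_add_le hπ hk b (by rw [← hlen, add_comm])
  refine (mem_iff_mem_smul_top_of_quotient_equiv b _ e).2 ?_
  have hfκ : f κ ∈ maximalIdeal R ^ m' • LinearMap.range f := by
    rw [← Submodule.map_top, ← Submodule.map_smul'']
    exact Submodule.mem_map_of_mem hκ
  rw [(by exact_mod_cast hm : m = m' + a), pow_add, ← Ideal.smul_eq_mul, Submodule.smul_assoc]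
  exact Submodule.smul_mono le_rfl hrange hfκ

variable {C : Submodule R S} {f : S →ₗ[R] H}

theorem bijective_comp_subtype_of_basis [IsArtinianRing R] (bC : Module.Basis (Fin 1) R C)
    (bH : Module.Basis (Fin 1) R H) (hf : ∀ x ∈ C, f x = 0 → x = 0) :
    Function.Bijective (f ∘ₗ C.subtype) :=
  bijective_of_injective_of_basis bC bH <| (injective_iff_map_eq_zero _).2 fun x hx =>
    Subtype.ext (hf x x.2 hx)

theorem length_range_eq_of_basis [IsArtinianRing R] (bC : Module.Basis (Fin 1) R C)
    (bH : Module.Basis (Fin 1) R H) (hf : ∀ x ∈ C, f x = 0 → x = 0) :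
    Module.length R (LinearMap.range f) = Module.length R R := by
  have htop : LinearMap.range f = ⊤ := eq_top_iff.2 fun y _ => by
    obtain ⟨x, rfl⟩ := (bijective_comp_subtype_of_basis bC bH hf).2 y
    exact LinearMap.mem_range_self f x
  rw [htop, Module.length_top, (bH.equiv (.singleton (Fin 1) R) (.refl _)).length_eq]

theorem mem_smul_top_of_quotient_equiv [IsArtinianRing R] (bC : Module.Basis (Fin 1) R C)
    (bH : Module.Basis (Fin 1) R H) (hf : ∀ x ∈ C, f x = 0 → x = 0)
    {κ : S} (hκ : κ ∈ C) {μ : R} {I : Ideal R} (hμ : μ ∈ I)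
    (e : (R ⧸ Ideal.span {μ}) ≃ₗ[R] (H ⧸ Submodule.span R {f κ})) :
    κ ∈ I • (⊤ : Submodule R S) := by
  let g : C ≃ₗ[R] H := .ofBijective _ (bijective_comp_subtype_of_basis bC bH hf)
  have hκI : (⟨κ, hκ⟩ : C) ∈ I • (⊤ : Submodule R C) :=
    (g.apply_mem_smul_top_iff I _).1 ((mem_iff_mem_smul_top_of_quotient_equiv bH I e).1 hμ)
  exact Submodule.smul_mono le_rfl le_top ((Submodule.mem_smul_top_iff I C _).1 hκI)

end ReciprocitySteps

theorem euler_system_bound_general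
    {R : Type*} [CommRing R] [IsLocalRing R] [IsArtinianRing R]
    (hprin : (IsLocalRing.maximalIdeal R).IsPrincipal)
    (k : ℕ) (hk : moduleLength R R = (k : ℕ∞))
    {L : Type*} [DecidableEq L]
    (even : Finset L → Prop)
    (hflip : ∀ (n : Finset L) (ℓ : L), ℓ ∉ n → (even (insert ℓ n) ↔ ¬ even n))
    (Sel : Finset L → Type*) [∀ n, AddCommGroup (Sel n)] [∀ n, Module R (Sel n)]
    (M : Finset L → Type*) [∀ n, AddCommGroup (M n)] [∀ n, Module R (M n)]
    (m : Finset L → ℕ) (hm : ∀ n, moduleLength R (M n) = (m n : ℕ∞))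
    (isoEven : ∀ n, even n → Nonempty (Sel n ≃ₗ[R] M n × M n))
    (Hunr Hord : L → Type*)
    [∀ ℓ, AddCommGroup (Hunr ℓ)] [∀ ℓ, Module R (Hunr ℓ)]
    [∀ ℓ, AddCommGroup (Hord ℓ)] [∀ ℓ, Module R (Hord ℓ)]
    (bUnr : ∀ ℓ, Nonempty (Module.Basis (Fin 1) R (Hunr ℓ)))
    (bOrd : ∀ ℓ, Nonempty (Module.Basis (Fin 1) R (Hord ℓ)))
    (locUnr : ∀ (n : Finset L) (ℓ : L), ℓ ∉ n → (Sel n →ₗ[R] Hunr ℓ))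
    (locOrd : ∀ (n : Finset L) (ℓ : L), ℓ ∉ n → (Sel (insert ℓ n) →ₗ[R] Hord ℓ))
    -- (DU)
    (hDU : ∀ (n : Finset L) (ℓ : L) (h : ℓ ∉ n),
      moduleLength R (LinearMap.range (locUnr n ℓ h)) +
        moduleLength R (LinearMap.range (locOrd n ℓ h)) = (k : ℕ∞))
    -- (LI)
    (hLI : ∀ (n : Finset L) (ℓ : L) (h : ℓ ∉ n),
      (even n → (m n : ℕ∞) =
        (m (insert ℓ n) : ℕ∞) + moduleLength R (LinearMap.range (locUnr n ℓ h))) ∧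
      (¬ even n → (m (insert ℓ n) : ℕ∞) =
        (m n : ℕ∞) + moduleLength R (LinearMap.range (locOrd n ℓ h))))
    -- (LS)
    (hLS : ∀ (n : Finset L) (C : Submodule R (Sel n)), C ≠ ⊥ →
      (∃ x : Sel n, C = Submodule.span R {x}) →
      ∃ (ℓ : L) (h : ℓ ∉ n), ∀ x ∈ C, locUnr n ℓ h x = 0 → x = 0)
    -- a bipartite Euler system of odd type
    (κ : ∀ n : Finset L, ¬ even n → Sel n)
    (lam : ∀ n : Finset L, even n → R)
    (hrec1 : ∀ (n : Finset L) (hn : even n) (ℓ : L) (h : ℓ ∉ n)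
        (ho : ¬ even (insert ℓ n)),
      Nonempty ((R ⧸ Ideal.span {lam n hn}) ≃ₗ[R]
        (Hord ℓ ⧸ Submodule.span R {locOrd n ℓ h (κ (insert ℓ n) ho)})))
    (hrec2 : ∀ (n : Finset L) (hn : ¬ even n) (ℓ : L) (h : ℓ ∉ n)
        (he : even (insert ℓ n)),
      Nonempty ((R ⧸ Ideal.span {lam (insert ℓ n) he}) ≃ₗ[R]
        (Hunr ℓ ⧸ Submodule.span R {locUnr n ℓ h (κ n hn)})))
    -- freeness
    (hfree : ∀ (n : Finset L) (hn : ¬ even n), ∃ C : Submodule R (Sel n),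
      κ n hn ∈ C ∧ Nonempty (Module.Basis (Fin 1) R C)) :
    (∀ (n : Finset L) (hn : even n),
      lam n hn ∈ (IsLocalRing.maximalIdeal R) ^ (m n)) ∧
    (∀ (n : Finset L) (hn : ¬ even n),
      κ n hn ∈ (IsLocalRing.maximalIdeal R) ^ (m n) • (⊤ : Submodule R (Sel n))) := by
  obtain ⟨π, hπ⟩ := hprin
  have hkR : Module.length R R = k := moduleLength_eq_length R R ▸ hk
  simp only [moduleLength_eq_length] at hm hDU hLI
  suffices ∀ t, (∀ n hn, m n = t → lam n hn ∈ maximalIdeal R ^ t) ∧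
      (∀ n hn, m n = t → κ n hn ∈ maximalIdeal R ^ t • (⊤ : Submodule R (Sel n))) from
    ⟨fun n hn => (this _).1 n hn rfl, fun n hn => (this _).2 n hn rfl⟩
  intro t
  induction t using Nat.strong_induction_on with | _ t ih => ?_
  have hEven : ∀ n hn, m n = t → lam n hn ∈ maximalIdeal R ^ t := by
    rintro n hn rfl
    rcases Nat.eq_zero_or_pos (m n) with h0 | hpos
    · simp [h0]
    have : Nontrivial (M n) := Module.length_pos_iff.1 (by rw [hm]; exact_mod_cast hpos)
    have : Nontrivial (Sel n) := (isoEven n hn).some.toEquiv.nontrivial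
    obtain ⟨x, hx⟩ := exists_ne (0 : Sel n)
    obtain ⟨ℓ, hℓ, hinj⟩ := hLS n _ (by simpa using hx) ⟨x, rfl⟩
    have ho : ¬ even (insert ℓ n) := fun h => (hflip n ℓ hℓ).1 h hn
    have hlt : m (insert ℓ n) < m n := by
      have := ENat.lt_add_left (ENat.natCast_ne_top (m (insert ℓ n)))
        (LinearMap.length_range_pos fun h => hx (hinj x (Submodule.mem_span_singleton_self x) h))
      rwa [add_comm, ← (hLI n ℓ hℓ).1 hn, Nat.cast_lt] at this
    exact mem_maximalIdeal_pow_of_quotient_equiv hπ hkR (bOrd ℓ).some _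
      ((ih _ hlt).2 _ ho rfl) (hDU n ℓ hℓ) ((hLI n ℓ hℓ).1 hn) (hrec1 n hn ℓ hℓ ho).some
  refine ⟨hEven, ?_⟩
  rintro n hn rfl
  obtain ⟨C, hκC, ⟨bC⟩⟩ := hfree n hn
  obtain ⟨ℓ, hℓ, hinj⟩ := hLS n C
    (by rw [C.eq_span_singleton_of_basis bC]; simpa using bC.ne_zero 0)
    ⟨_, C.eq_span_singleton_of_basis bC⟩
  have he : even (insert ℓ n) := (hflip n ℓ hℓ).2 hn
  have hmℓ : m (insert ℓ n) = m n := by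
    have hb := hDU n ℓ hℓ
    rw [length_range_eq_of_basis bC (bUnr ℓ).some hinj, hkR] at hb
    have hmℓ := (hLI n ℓ hℓ).2 hn
    rwa [(by simpa using hb : Module.length R (LinearMap.range (locOrd n ℓ hℓ)) = 0), add_zero,
      Nat.cast_inj] at hmℓ
  exact mem_smul_top_of_quotient_equiv bC (bUnr ℓ).some hinj hκC (hEven _ he hmℓ)
    (hrec2 n hn ℓ hℓ he).some

/-- Given bipartite Euler system data over `R` satisfying (DU), (LI), (RHO) and (LS),
a free bipartite Euler system of odd type satisfies `λ_n ∈ Stub_n` for `n ∈ N^even`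
and `κ_n ∈ Stub_n` for `n ∈ N^odd`. -/
theorem euler_system_bound
    {R : Type*} [CommRing R] [IsLocalRing R] [IsArtinianRing R]
    (hprin : (IsLocalRing.maximalIdeal R).IsPrincipal)
    (k : ℕ) (hk : moduleLength R R = (k : ℕ∞))
    {L : Type*} [Infinite L] [DecidableEq L]
    (even : Finset L → Prop)
    (hflip : ∀ (n : Finset L) (ℓ : L), ℓ ∉ n → (even (insert ℓ n) ↔ ¬ even n))
    (Sel : Finset L → Type*) [∀ n, AddCommGroup (Sel n)] [∀ n, Module R (Sel n)]
    (M : Finset L → Type*) [∀ n, AddCommGroup (M n)] [∀ n, Module R (M n)]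
    (m : Finset L → ℕ) (hm : ∀ n, moduleLength R (M n) = (m n : ℕ∞))
    (isoEven : ∀ n, even n → Nonempty (Sel n ≃ₗ[R] M n × M n))
    (isoOdd : ∀ n, ¬ even n → Nonempty (Sel n ≃ₗ[R] R × M n × M n))
    (Hunr Hord : L → Type*)
    [∀ ℓ, AddCommGroup (Hunr ℓ)] [∀ ℓ, Module R (Hunr ℓ)]
    [∀ ℓ, AddCommGroup (Hord ℓ)] [∀ ℓ, Module R (Hord ℓ)]
    (bUnr : ∀ ℓ, Nonempty (Module.Basis (Fin 1) R (Hunr ℓ)))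
    (bOrd : ∀ ℓ, Nonempty (Module.Basis (Fin 1) R (Hord ℓ)))
    (locUnr : ∀ (n : Finset L) (ℓ : L), ℓ ∉ n → (Sel n →ₗ[R] Hunr ℓ))
    (locOrd : ∀ (n : Finset L) (ℓ : L), ℓ ∉ n → (Sel (insert ℓ n) →ₗ[R] Hord ℓ))
    -- (DU)
    (hDU : ∀ (n : Finset L) (ℓ : L) (h : ℓ ∉ n),
      moduleLength R (LinearMap.range (locUnr n ℓ h)) +
        moduleLength R (LinearMap.range (locOrd n ℓ h)) = (k : ℕ∞))
    -- (LI)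
    (hLI : ∀ (n : Finset L) (ℓ : L) (h : ℓ ∉ n),
      (even n → (m n : ℕ∞) =
        (m (insert ℓ n) : ℕ∞) + moduleLength R (LinearMap.range (locUnr n ℓ h))) ∧
      (¬ even n → (m (insert ℓ n) : ℕ∞) =
        (m n : ℕ∞) + moduleLength R (LinearMap.range (locOrd n ℓ h))))
    -- (RHO)
    (hRHO : ∀ (n : Finset L) (ℓ : L) (h : ℓ ∉ n),
      ((∀ x ∈ mTorsion R (Sel n), locUnr n ℓ h x = 0) →
        mdim R (Sel (insert ℓ n)) = mdim R (Sel n) + 1) ∧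
      ((¬ ∀ x ∈ mTorsion R (Sel n), locUnr n ℓ h x = 0) →
        mdim R (Sel (insert ℓ n)) + 1 = mdim R (Sel n)))
    -- (LS)
    (hLS : ∀ (n : Finset L) (C : Submodule R (Sel n)), C ≠ ⊥ →
      (∃ x : Sel n, C = Submodule.span R {x}) →
      ∃ (ℓ : L) (h : ℓ ∉ n), ∀ x ∈ C, locUnr n ℓ h x = 0 → x = 0)
    -- a bipartite Euler system of odd type
    (κ : ∀ n : Finset L, ¬ even n → Sel n)
    (lam : ∀ n : Finset L, even n → R)
    (hrec1 : ∀ (n : Finset L) (hn : even n) (ℓ : L) (h : ℓ ∉ n)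
        (ho : ¬ even (insert ℓ n)),
      Nonempty ((R ⧸ Ideal.span {lam n hn}) ≃ₗ[R]
        (Hord ℓ ⧸ Submodule.span R {locOrd n ℓ h (κ (insert ℓ n) ho)})))
    (hrec2 : ∀ (n : Finset L) (hn : ¬ even n) (ℓ : L) (h : ℓ ∉ n)
        (he : even (insert ℓ n)),
      Nonempty ((R ⧸ Ideal.span {lam (insert ℓ n) he}) ≃ₗ[R]
        (Hunr ℓ ⧸ Submodule.span R {locUnr n ℓ h (κ n hn)})))
    -- freeness
    (hfree : ∀ (n : Finset L) (hn : ¬ even n), ∃ C : Submodule R (Sel n),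
      κ n hn ∈ C ∧ Nonempty (Module.Basis (Fin 1) R C)) :
    (∀ (n : Finset L) (hn : even n),
      lam n hn ∈ (IsLocalRing.maximalIdeal R) ^ (m n)) ∧
    (∀ (n : Finset L) (hn : ¬ even n),
      κ n hn ∈ (IsLocalRing.maximalIdeal R) ^ (m n) • (⊤ : Submodule R (Sel n))) :=
  euler_system_bound_general hprin k hk even hflip Sel M m hm isoEven Hunr Hord bUnr bOrd locUnr
    locOrd hDU hLI hLS κ lam hrec1 hrec2 hfree
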